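/- Combining the previous two results: if C(t) = F(t)ᵀF(t) with Ḟ = A(t)F, λ_max(C(t*)) is a simple eigenvalue with unit eigenvector e_max, then ∂_t λ_max(C(t))|_{t=t*} = 2⟨F(t*)e_max, S(t*)F(t*)e_max⟩ with S = ½(A + Aᵀ). In particular, ∂_t λ_max(C(t*)) ≠ 0 if and only if ⟨F(t*)e_max, S(t*)F(t*)e_max⟩ ≠ 0. -/

import Mathlib

/-!
Write `v(t) = F(t) e(t)`. Since `e` is a unit eigenvector of `FᵀF`, `λ = ⟨v, v⟩`, so
`λ' = 2⟨v, v'⟩` with `v' = A v + F e'`. The term `⟨v, F e'⟩ = ⟨FᵀF e, e'⟩ = λ ⟨e, e'⟩`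
vanishes because `e` has constant length, and `⟨v, A v⟩ = ⟨v, S v⟩`.
-/

open Matrix

section Derivatives

variable {𝕜 : Type*} [NontriviallyNormedField 𝕜] {n : Type*} [Fintype n] {t : 𝕜}

theorem HasDerivAt.dotProduct {u v : 𝕜 → n → 𝕜} {u' v' : n → 𝕜}
    (hu : HasDerivAt u u' t) (hv : HasDerivAt v v' t) :
    HasDerivAt (fun s => u s ⬝ᵥ v s) (u' ⬝ᵥ v t + u t ⬝ᵥ v') t := by
  have h := HasDerivAt.fun_sum fun i (_ : i ∈ Finset.univ) =>
    (hasDerivAt_pi.1 hu i).mul (hasDerivAt_pi.1 hv i)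
  rwa [Finset.sum_add_distrib] at h

theorem hasDerivAt_mulVec {m : Type*} {M : 𝕜 → Matrix m n 𝕜} {M' : Matrix m n 𝕜}
    {v : 𝕜 → n → 𝕜} {v' : n → 𝕜} (hM : ∀ i j, HasDerivAt (fun s => M s i j) (M' i j) t)
    (hv : HasDerivAt v v' t) :
    HasDerivAt (fun s => M s *ᵥ v s) (M' *ᵥ v t + M t *ᵥ v') t :=
  hasDerivAt_pi.2 fun i => (hasDerivAt_pi.2 (hM i)).dotProduct hv

theorem HasDerivAt.dotProduct_eq_zero_of_dotProduct_self_const [NeZero (2 : 𝕜)]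
    {e : 𝕜 → n → 𝕜} {e' : n → 𝕜} {c : 𝕜} (he : HasDerivAt e e' t)
    (hc : ∀ s, e s ⬝ᵥ e s = c) :
    e t ⬝ᵥ e' = 0 := by
  have hconst : HasDerivAt (fun s => e s ⬝ᵥ e s) 0 t := by
    simpa only [hc] using hasDerivAt_const t c
  have h := (he.dotProduct he).unique hconst
  rw [dotProduct_comm, ← two_mul] at h
  exact (mul_eq_zero.1 h).resolve_left two_ne_zero

end Derivatives

section Algebra

variable {m n : Type*} [Fintype m] [Fintype n]

theorem mulVec_dotProduct_mulVec {R : Type*} [CommSemiring R] (M : Matrix m n R)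
    (v w : n → R) : (M *ᵥ v) ⬝ᵥ (M *ᵥ w) = ((Mᵀ * M) *ᵥ v) ⬝ᵥ w := by
  rw [dotProduct_mulVec, ← mulVec_transpose, mulVec_mulVec]

theorem dotProduct_half_add_transpose_mulVec {K : Type*} [Field K] [NeZero (2 : K)]
    (A : Matrix n n K) (v : n → K) :
    v ⬝ᵥ (((1 / 2 : K) • (A + Aᵀ)) *ᵥ v) = v ⬝ᵥ (A *ᵥ v) := by
  have htranspose : v ⬝ᵥ (Aᵀ *ᵥ v) = v ⬝ᵥ (A *ᵥ v) := by
    rw [dotProduct_mulVec, vecMul_transpose, dotProduct_comm]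
  rw [smul_mulVec, dotProduct_smul, add_mulVec, dotProduct_add, htranspose, smul_eq_mul]
  field_simp
  ring

end Algebra

theorem nondegeneracy_condition_equivalence_general
    {n : ℕ}
    (F A : ℝ → Matrix (Fin n) (Fin n) ℝ)
    (hF : ∀ t i j, HasDerivAt (fun u => F u i j) ((A t * F t) i j) t)
    (e e' : ℝ → Fin n → ℝ)
    (he : ∀ t i, HasDerivAt (fun u => e u i) (e' t i) t)
    (hunit : ∀ t, e t ⬝ᵥ e t = 1)
    (lam : ℝ → ℝ)
    (heig : ∀ t, ((F t)ᵀ * F t) *ᵥ e t = lam t • e t)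
    (t₀ : ℝ) :
    HasDerivAt lam
      (2 * ((F t₀ *ᵥ e t₀) ⬝ᵥ ((((1 / 2 : ℝ) • (A t₀ + (A t₀)ᵀ))) *ᵥ (F t₀ *ᵥ e t₀)))) t₀
    ∧ (deriv lam t₀ ≠ 0 ↔
        (F t₀ *ᵥ e t₀) ⬝ᵥ ((((1 / 2 : ℝ) • (A t₀ + (A t₀)ᵀ))) *ᵥ (F t₀ *ᵥ e t₀)) ≠ 0) := by
  have he₀ : HasDerivAt e (e' t₀) t₀ := hasDerivAt_pi.2 (he t₀)
  have hlam : lam = fun t => (F t *ᵥ e t) ⬝ᵥ (F t *ᵥ e t) := by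
    ext t
    rw [mulVec_dotProduct_mulVec, heig, smul_dotProduct, hunit, smul_eq_mul, mul_one]
  have hFe' : (F t₀ *ᵥ e t₀) ⬝ᵥ (F t₀ *ᵥ e' t₀) = 0 := by
    rw [mulVec_dotProduct_mulVec, heig, smul_dotProduct,
      he₀.dotProduct_eq_zero_of_dotProduct_self_const hunit, smul_zero]
  have hv := hasDerivAt_mulVec (hF t₀) he₀
  have hderiv := hlam ▸ hv.dotProduct hv
  rw [← mulVec_mulVec, dotProduct_comm, ← two_mul, dotProduct_add, hFe', add_zero,
    ← dotProduct_half_add_transpose_mulVec] at hderiv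
  refine ⟨hderiv, ?_⟩
  rw [hderiv.deriv]
  exact mul_ne_zero_iff_left two_ne_zero

/-- If C(t) = F(t)ᵀF(t) with Ḟ = A(t)F, and λ(t) = λ_max(C(t)) is a simple
eigenvalue with C¹ family of unit eigenvectors e(t), then
∂_t λ(t)|_{t=t*} = 2⟨F(t*)e(t*), S(t*)F(t*)e(t*)⟩ with S = ½(A + Aᵀ); in particular
∂_t λ(t*) ≠ 0 iff ⟨F(t*)e(t*), S(t*)F(t*)e(t*)⟩ ≠ 0. -/
theorem nondegeneracy_condition_equivalence
    {n : ℕ}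
    (F A : ℝ → Matrix (Fin n) (Fin n) ℝ)
    (hFinv : ∀ t, IsUnit (F t))
    (hF : ∀ t i j, HasDerivAt (fun u => F u i j) ((A t * F t) i j) t)
    (e e' : ℝ → Fin n → ℝ)
    (he : ∀ t i, HasDerivAt (fun u => e u i) (e' t i) t)
    (hunit : ∀ t, e t ⬝ᵥ e t = 1)
    (lam : ℝ → ℝ)
    (heig : ∀ t, ((F t)ᵀ * F t) *ᵥ e t = lam t • e t)
    (t₀ : ℝ)
    (hsimple : ∀ v : Fin n → ℝ, ((F t₀)ᵀ * F t₀) *ᵥ v = lam t₀ • v → ∃ c : ℝ, v = c • e t₀)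
    (hmax : ∀ v : Fin n → ℝ, v ⬝ᵥ v = 1 → v ⬝ᵥ (((F t₀)ᵀ * F t₀) *ᵥ v) ≤ lam t₀) :
    HasDerivAt lam
      (2 * ((F t₀ *ᵥ e t₀) ⬝ᵥ ((((1 / 2 : ℝ) • (A t₀ + (A t₀)ᵀ))) *ᵥ (F t₀ *ᵥ e t₀)))) t₀
    ∧ (deriv lam t₀ ≠ 0 ↔
        (F t₀ *ᵥ e t₀) ⬝ᵥ ((((1 / 2 : ℝ) • (A t₀ + (A t₀)ᵀ))) *ᵥ (F t₀ *ᵥ e t₀)) ≠ 0) :=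
  nondegeneracy_condition_equivalence_general F A hF e e' he hunit lam heig t₀
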